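/- arXiv:2307.05448 — 4 statements merged into one kernel-verified Lean document; each statement's English description precedes it below -/
import Mathlib

section
/- Let U₁, ..., U_m be sets in R^{n₁}, ..., R^{n_m} respectively, each with 0 ∉ aff(U_i), and let P(b) = {y ∈ R^d : Py = b, y ≥ 0} for P ∈ R^{k×d}. If a block matrix B = [B₁ | ... | B_m] maps U₁ × ... × U_m into P(b) and each B_i x_i ≥ 0 for all x_i ∈ U_i, then there exist vectors b₁, ..., b_m ∈ R^k with b₁ + ... + b_m = b such that for each i, P B_i x_i = b_i for all x_i ∈ U_i, i.e., B_i maps U_i into P(b_i). -/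
open Matrix

/-- Suppose each set `U i ⊆ ℝ^{n i}` is nonempty and admits `τ i` with
`⟨τ i, x⟩ = 1` on `U i` (i.e. `0 ∉ aff (U i)`), and the block matrix
`B = [B₁ | ... | B_m]` maps `U₁ × ⋯ × U_m` into `P(b) = {y : Pm y = b, y ≥ 0}`, with
each block mapping `U i` to nonnegative vectors. Then there are vectors `b i` summing to
`b` such that each block `B i` maps `U i` into `P(b i)`. -/
theorem stmt_3 (m k d : ℕ) (n : Fin m → ℕ)
    (U : ∀ i, Set (Fin (n i) → ℝ)) (hne : ∀ i, (U i).Nonempty)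
    (τ : ∀ i, Fin (n i) → ℝ) (hτ : ∀ i, ∀ x ∈ U i, τ i ⬝ᵥ x = 1)
    (Pm : Matrix (Fin k) (Fin d) ℝ) (bv : Fin k → ℝ)
    (B : ∀ i, Matrix (Fin d) (Fin (n i)) ℝ)
    (hpos : ∀ i, ∀ x ∈ U i, ∀ r, 0 ≤ (B i).mulVec x r)
    (hmap : ∀ x : (∀ i, Fin (n i) → ℝ), (∀ i, x i ∈ U i) →
        Pm.mulVec (∑ i, (B i).mulVec (x i)) = bv ∧
          ∀ r, 0 ≤ (∑ i, (B i).mulVec (x i)) r) :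
    ∃ b : Fin m → (Fin k → ℝ), (∑ i, b i) = bv ∧
      ∀ i, ∀ x ∈ U i,
        Pm.mulVec ((B i).mulVec x) = b i ∧ ∀ r, 0 ≤ (B i).mulVec x r := by
  classical
  choose x0 hx0 using hne
  refine ⟨fun i => Pm.mulVec ((B i).mulVec (x0 i)), ?_, ?_⟩
  · have h := (hmap x0 hx0).1
    rw [← h]
    simp only [← Matrix.mulVecLin_apply, ← map_sum]
  · intro i x hx
    refine ⟨?_, hpos i x hx⟩
    -- consider the tuple updating x0 at i with x
    have hmem : ∀ j, Function.update x0 i x j ∈ U j := by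
      intro j
      rcases eq_or_ne j i with rfl | hji
      · simpa using hx
      · simpa [Function.update_of_ne hji] using hx0 j
    have h1 := (hmap (Function.update x0 i x) hmem).1
    have h2 := (hmap x0 hx0).1
    have hsplit : ∀ f : Fin m → (Fin d → ℝ),
        ∑ j, f j = f i + ∑ j ∈ Finset.univ.erase i, f j := fun f =>
      (Finset.add_sum_erase _ f (Finset.mem_univ i)).symm
    have hs : (∑ j, (B j).mulVec (Function.update x0 i x j))
        = (B i).mulVec x - (B i).mulVec (x0 i) + ∑ j, (B j).mulVec (x0 j) := by
      rw [hsplit, hsplit (fun j => (B j).mulVec (x0 j))]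
      have : ∑ j ∈ Finset.univ.erase i, (B j).mulVec (Function.update x0 i x j)
          = ∑ j ∈ Finset.univ.erase i, (B j).mulVec (x0 j) := by
        apply Finset.sum_congr rfl
        intro j hj
        rw [Function.update_of_ne (Finset.ne_of_mem_erase hj)]
      rw [this, Function.update_self]
      abel
    rw [hs] at h1
    have : Pm.mulVec ((B i).mulVec x - (B i).mulVec (x0 i)) = 0 := by
      have := h1
      rw [Matrix.mulVec_add, h2] at this
      linear_combination (norm := module) this
    have h3 := sub_eq_zero.mp (by rwa [Matrix.mulVec_sub] at this)
    exact h3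
end

section
/- Let U₁, ..., U_m be sets in R^{n_i}, each with 0 ∉ aff(U_i), and B = [B₁ | ... | B_m] a block matrix mapping U₁ × ... × U_m into P(b) = {y : Py = b, y ≥ 0}. Then there exist matrices B'₁, ..., B'_m with B' = [B'₁|...|B'_m] agreeing with B on U₁ × ... × U_m (i.e., B'x = Bx for all x in the product), and such that B'_i x_i ≥ 0 componentwise for all x_i ∈ U_i and each i. -/
open Matrix

/-- Suppose each `U i` is nonempty and compact and admits `τ i` with
`⟨τ i, x⟩ = 1` on `U i`, and the block matrix `B = [B₁ | ... | B_m]` maps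
`U₁ × ⋯ × U_m` into `P(b) = {y : Pm y = b, y ≥ 0}`. Then there exist blocks
`B'₁, ..., B'_m` agreeing with `B` on the Cartesian product and with each
`B' i x ≥ 0` componentwise on `U i`. -/
theorem stmt_4 (m k d : ℕ) (n : Fin m → ℕ)
    (U : ∀ i, Set (Fin (n i) → ℝ)) (hne : ∀ i, (U i).Nonempty)
    (hcomp : ∀ i, IsCompact (U i))
    (τ : ∀ i, Fin (n i) → ℝ) (hτ : ∀ i, ∀ x ∈ U i, τ i ⬝ᵥ x = 1)
    (Pm : Matrix (Fin k) (Fin d) ℝ) (bv : Fin k → ℝ)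
    (B : ∀ i, Matrix (Fin d) (Fin (n i)) ℝ)
    (hmap : ∀ x : (∀ i, Fin (n i) → ℝ), (∀ i, x i ∈ U i) →
        Pm.mulVec (∑ i, (B i).mulVec (x i)) = bv ∧
          ∀ r, 0 ≤ (∑ i, (B i).mulVec (x i)) r) :
    ∃ B' : ∀ i, Matrix (Fin d) (Fin (n i)) ℝ,
      (∀ x : (∀ i, Fin (n i) → ℝ), (∀ i, x i ∈ U i) →
          (∑ i, (B' i).mulVec (x i)) = ∑ i, (B i).mulVec (x i)) ∧
      ∀ i, ∀ x ∈ U i, ∀ r, 0 ≤ (B' i).mulVec x r := by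

  rcases Nat.eq_zero_or_pos m with hm | hm
  · subst hm
    exact ⟨B, fun x _ => rfl, fun i => i.elim0⟩
  · set i₀ : Fin m := ⟨0, hm⟩ with hi₀
    have cont : ∀ (i : Fin m) (r : Fin d),
        Continuous fun x : Fin (n i) → ℝ => (B i).mulVec x r := by
      intro i r
      simp only [mulVec, dotProduct]
      exact continuous_finset_sum _ fun c _ => continuous_const.mul (continuous_apply c)
    have key : ∀ i r, ∃ v ∈ U i, ∀ x ∈ U i, (B i).mulVec v r ≤ (B i).mulVec x r := by
      intro i r
      obtain ⟨v, hv, hmin⟩ := (hcomp i).exists_isMinOn (hne i) (cont i r).continuousOn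
      exact ⟨v, hv, fun x hx => hmin hx⟩
    choose z hzU hzmin using key
    set β : ∀ i : Fin m, Fin d → ℝ := fun i r => (B i).mulVec (z i r) r with hβ
    set γ : ∀ i : Fin m, Fin d → ℝ :=
      fun i r => if i = i₀ then ∑ j ∈ Finset.univ.erase i₀, β j r else -(β i r) with hγ
    set B' : ∀ i, Matrix (Fin d) (Fin (n i)) ℝ :=
      fun i => Matrix.of fun r c => B i r c + γ i r * τ i c with hB'
    have hmv : ∀ i, ∀ v ∈ U i, ∀ r, (B' i).mulVec v r = (B i).mulVec v r + γ i r := by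
      intro i v hv r
      simp only [hB', mulVec, dotProduct, Matrix.of_apply, add_mul]
      rw [Finset.sum_add_distrib]
      simp only [mul_assoc, ← Finset.mul_sum]
      rw [show (∑ c, τ i c * v c) = τ i ⬝ᵥ v from rfl, hτ i v hv, mul_one]
    have hγsum : ∀ r, ∑ i, γ i r = 0 := by
      intro r
      rw [← Finset.add_sum_erase _ _ (Finset.mem_univ i₀)]
      have h1 : ∑ i ∈ Finset.univ.erase i₀, γ i r = ∑ i ∈ Finset.univ.erase i₀, -(β i r) := by
        refine Finset.sum_congr rfl fun i hi => ?_
        simp [hγ, (Finset.mem_erase.mp hi).1]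
      rw [h1]
      simp [hγ]
    refine ⟨B', ?_, ?_⟩
    · intro x hx
      funext r
      simp only [Finset.sum_apply]
      calc ∑ i, (B' i).mulVec (x i) r = ∑ i, ((B i).mulVec (x i) r + γ i r) :=
            Finset.sum_congr rfl fun i _ => hmv i (x i) (hx i) r
        _ = ∑ i, (B i).mulVec (x i) r + ∑ i, γ i r := Finset.sum_add_distrib
        _ = ∑ i, (B i).mulVec (x i) r := by rw [hγsum, add_zero]
    · intro i x hx r
      rw [hmv i x hx r]
      by_cases hi : i = i₀
      · subst hi
        simp only [hγ, if_pos rfl]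
        set y : ∀ j, Fin (n j) → ℝ := Function.update (fun j => z j r) i₀ x with hy
        have hyU : ∀ j, y j ∈ U j := by
          intro j
          by_cases hj : j = i₀
          · subst hj; simpa [hy] using hx
          · rw [hy, Function.update_of_ne hj]; exact hzU j r
        have h0 := (hmap y hyU).2 r
        simp only [Finset.sum_apply] at h0
        rw [← Finset.add_sum_erase _ _ (Finset.mem_univ i₀)] at h0
        have h2 : ∑ j ∈ Finset.univ.erase i₀, (B j).mulVec (y j) r
            = ∑ j ∈ Finset.univ.erase i₀, β j r := by
          refine Finset.sum_congr rfl fun j hj => ?_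
          rw [hy, Function.update_of_ne (Finset.mem_erase.mp hj).1]
        rw [h2, hy, Function.update_self] at h0
        exact h0
      · simp only [hγ, if_neg hi]
        have := hzmin i r x hx
        linarith
end

section
/- Let M = {A ∈ R^{d×Σ} : constraints of the characterization theorem} be the polytope of matrices with P A_{(ja)} = b_j for terminal sequences ja, A_{(σ)} = 0 for nonterminal σ, ∑_{j'∈C_∅} b_{j'} = p, ∑_{j'∈C_{ja}} b_{j'} = b_j for nonterminal ja, and A_{(σ)} ∈ [0,γ]^d, for auxiliary variables b_j ∈ R^k. Then every A ∈ M satisfies A x ∈ P = {y : Py = p, y ≥ 0} for all x ∈ Q, where Q is the sequence-form polytope. -/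
/-- A perfect-recall tree-form sequential decision process.  `Seq` is the finite set of
sequences (information set–action pairs plus the empty sequence `root`), `act j` is the
set of sequences `ja` available at information set `j`, and `par j` is the parent
sequence of information set `j`.  `depth` witnesses well-foundedness of the tree. -/
structure TFDP where
  Seq : Type
  Inf : Type
  [fintypeSeq : Fintype Seq]
  [decEqSeq : DecidableEq Seq]
  [fintypeInf : Fintype Inf]
  [decEqInf : DecidableEq Inf]
  root : Seq
  par : Inf → Seq
  act : Inf → Finset Seq
  act_nonempty : ∀ j, (act j).Nonempty
  root_not_act : ∀ j, root ∉ act j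
  act_disjoint : ∀ j j', j ≠ j' → Disjoint (act j) (act j')
  covers : ∀ σ : Seq, σ = root ∨ ∃ j, σ ∈ act j
  depth : Inf → ℕ
  par_wf : ∀ j, par j = root ∨ ∃ j', par j ∈ act j' ∧ depth j' < depth j

attribute [instance] TFDP.fintypeSeq TFDP.decEqSeq TFDP.fintypeInf TFDP.decEqInf

/-- The sequence-form strategy polytope
`Q = {x ≥ 0 : x[∅] = 1, ∑_{a ∈ A_j} x[ja] = x[p_j] ∀ j}`. -/
def TFDP.Q (T : TFDP) : Set (T.Seq → ℝ) :=
  {x | (∀ σ, 0 ≤ x σ) ∧ x T.root = 1 ∧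
    ∀ j, (∑ σ ∈ T.act j, x σ) = x (T.par j)}

/-- The polytope `M_{Q→P}` of the characterization theorem: matrices `A ∈ ℝ^{d×Σ}` such
that, for some auxiliary vectors `b_j ∈ ℝ^k`, (i) `Pm A_{(ja)} = b_j` for every terminal
sequence `ja`; (ii) `A_{(σ)} = 0` for every nonterminal sequence `σ`;
(iii) `∑_{j' ∈ C_∅} b_{j'} = p`; (iv) `∑_{j' ∈ C_{ja}} b_{j'} = b_j` for every
nonterminal sequence `ja`; and (v) all columns lie in `[0,γ]^d`.
(A sequence `σ` is terminal iff no information set has parent sequence `σ`.) -/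
def TFDP.Mset (T : TFDP) {k d : ℕ} (Pm : Matrix (Fin k) (Fin d) ℝ)
    (p : Fin k → ℝ) (γ : ℝ) : Set (Matrix (Fin d) T.Seq ℝ) :=
  {A | ∃ b : T.Inf → (Fin k → ℝ),
    (∀ j, ∀ σ ∈ T.act j, (¬ ∃ j', T.par j' = σ) →
      Pm.mulVec (fun i => A i σ) = b j) ∧
    (∀ σ, (∃ j', T.par j' = σ) → ∀ i, A i σ = 0) ∧
    ((∑ j ∈ Finset.univ.filter (fun j => T.par j = T.root), b j) = p) ∧
    (∀ j, ∀ σ ∈ T.act j, (∃ j', T.par j' = σ) →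
      (∑ j' ∈ Finset.univ.filter (fun j' => T.par j' = σ), b j') = b j) ∧
    (∀ i σ, A i σ ∈ Set.Icc (0 : ℝ) γ)}

/-- soundness direction of the characterization theorem.  Every
matrix `A` in the characterization polytope `M_{Q→P}` maps the sequence-form polytope
`Q` into `P = {y : Pm y = p, y ≥ 0}`. -/
theorem stmt_11 (T : TFDP) (k d : ℕ) (Pm : Matrix (Fin k) (Fin d) ℝ)
    (p : Fin k → ℝ) (γ : ℝ)
    (hroot : ∃ j, T.par j = T.root)
    (A : Matrix (Fin d) T.Seq ℝ) (hA : A ∈ T.Mset Pm p γ) :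
    ∀ x ∈ T.Q, Pm.mulVec (A.mulVec x) = p ∧ ∀ i, 0 ≤ A.mulVec x i := by
  obtain ⟨b, h1, h2, h3, h4, h5⟩ := hA
  intro x hx
  obtain ⟨hx0, hx1, hxj⟩ := hx
  constructor
  · funext i
    classical
    set t : T.Inf → ℝ := fun j' => x (T.par j') * b j' i with ht
    set c : T.Seq → ℝ := fun σ => x σ * Matrix.mulVec Pm (fun l => A l σ) i with hc
    have croot : c T.root = 0 := by
      have h0 : ∀ l, A l T.root = 0 := h2 T.root hroot
      simp [hc, Matrix.mulVec, dotProduct, h0]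
    have step1 : Pm.mulVec (A.mulVec x) i = ∑ σ, c σ := by
      simp only [Matrix.mulVec, dotProduct, Finset.mul_sum, hc]
      rw [Finset.sum_comm]
      exact Finset.sum_congr rfl fun σ _ => Finset.sum_congr rfl fun l _ => by ring
    -- Lemma A: partition of sequences into root and the action sets
    have lemA : (∑ σ, c σ) = ∑ j, ∑ σ ∈ T.act j, c σ := by
      have : ∀ j : T.Inf, (∑ σ ∈ T.act j, c σ)
          = ∑ σ, if σ ∈ T.act j then c σ else 0 := by
        intro j
        rw [Finset.sum_ite_mem, Finset.univ_inter]
      rw [Finset.sum_congr rfl fun j _ => this j, Finset.sum_comm]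
      refine Finset.sum_congr rfl fun σ _ => ?_
      rcases T.covers σ with hσ | ⟨j₀, hj₀⟩
      · subst hσ
        rw [croot]
        exact (Finset.sum_eq_zero fun j _ => by simp [T.root_not_act j]).symm
      · rw [Finset.sum_eq_single j₀]
        · simp [hj₀]
        · intro j _ hne
          have : σ ∉ T.act j := fun hmem =>
            Finset.disjoint_left.mp (T.act_disjoint j j₀ hne) hmem hj₀
          simp [this]
        · intro h; exact absurd (Finset.mem_univ j₀) h
    -- key per-information-set identity
    have key : ∀ j, (∑ σ ∈ T.act j,
        (c σ + ∑ j' ∈ Finset.univ.filter (fun j' => T.par j' = σ), t j')) = t j := by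
      intro j
      have hterms : ∀ σ ∈ T.act j,
          (c σ + ∑ j' ∈ Finset.univ.filter (fun j' => T.par j' = σ), t j')
            = x σ * b j i := by
        intro σ hσ
        by_cases hterm : ∃ j', T.par j' = σ
        · have hc0 : ∀ l, A l σ = 0 := h2 σ hterm
          have hczero : c σ = 0 := by simp [hc, Matrix.mulVec, dotProduct, hc0]
          rw [hczero, zero_add]
          have h4' : (∑ j' ∈ Finset.univ.filter (fun j' => T.par j' = σ), b j' i)
              = b j i := by
            have := congrFun (h4 j σ hσ hterm) i
            simpa [Finset.sum_apply] using this
          calc (∑ j' ∈ Finset.univ.filter (fun j' => T.par j' = σ), t j')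
              = ∑ j' ∈ Finset.univ.filter (fun j' => T.par j' = σ), x σ * b j' i := by
                refine Finset.sum_congr rfl fun j' hj' => ?_
                have : T.par j' = σ := (Finset.mem_filter.mp hj').2
                rw [ht]; simp [this]
            _ = x σ * ∑ j' ∈ Finset.univ.filter (fun j' => T.par j' = σ), b j' i := by
                rw [Finset.mul_sum]
            _ = x σ * b j i := by rw [h4']
        · have hcol := congrFun (h1 j σ hσ hterm) i
          have hfib : Finset.univ.filter (fun j' => T.par j' = σ) = ∅ := by
            apply Finset.filter_eq_empty_iff.mpr
            intro j' _ hj'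
            exact hterm ⟨j', hj'⟩
          rw [hfib, Finset.sum_empty, add_zero, hc]
          simp [hcol]
      rw [Finset.sum_congr rfl hterms, ← Finset.sum_mul, hxj j]
    -- Lemma B: reindexing the triple sum
    have lemB : (∑ j, ∑ σ ∈ T.act j,
          ∑ j' ∈ Finset.univ.filter (fun j' => T.par j' = σ), t j')
        = ∑ j' ∈ Finset.univ.filter (fun j' => ¬ T.par j' = T.root), t j' := by
      have inner : ∀ j : T.Inf, (∑ σ ∈ T.act j,
          ∑ j' ∈ Finset.univ.filter (fun j' => T.par j' = σ), t j')
            = ∑ j' : T.Inf, if T.par j' ∈ T.act j then t j' else 0 := by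
        intro j
        have : ∀ σ ∈ T.act j, (∑ j' ∈ Finset.univ.filter (fun j' => T.par j' = σ), t j')
            = ∑ j' : T.Inf, if T.par j' = σ then t j' else 0 := by
          intro σ _
          rw [Finset.sum_filter]
        rw [Finset.sum_congr rfl this, Finset.sum_comm]
        refine Finset.sum_congr rfl fun j' _ => ?_
        rw [Finset.sum_ite_eq (T.act j) (T.par j') (fun _ => t j')]
      rw [Finset.sum_congr rfl fun j _ => inner j, Finset.sum_comm, Finset.sum_filter]
      refine Finset.sum_congr rfl fun j' _ => ?_
      rcases T.covers (T.par j') with hpr | ⟨j₀, hj₀⟩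
      · rw [if_neg (by simp [hpr])]
        exact Finset.sum_eq_zero fun j _ => by
          rw [if_neg]; rw [hpr]; exact T.root_not_act j
      · have hne : ¬ T.par j' = T.root := fun h => T.root_not_act j₀ (h ▸ hj₀)
        rw [if_pos hne, Finset.sum_eq_single j₀]
        · rw [if_pos hj₀]
        · intro j _ hne'
          rw [if_neg]
          intro hmem
          exact Finset.disjoint_left.mp (T.act_disjoint j j₀ hne') hmem hj₀
        · intro h; exact absurd (Finset.mem_univ j₀) h
    -- assemble
    have total : (∑ j, t j) = (∑ σ, c σ)
        + ∑ j' ∈ Finset.univ.filter (fun j' => ¬ T.par j' = T.root), t j' := by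
      have hsplit : ∀ j : T.Inf, t j = (∑ σ ∈ T.act j, c σ)
          + ∑ σ ∈ T.act j, ∑ j' ∈ Finset.univ.filter (fun j' => T.par j' = σ), t j' := by
        intro j
        rw [← key j, Finset.sum_add_distrib]
      rw [Finset.sum_congr rfl fun j _ => hsplit j, Finset.sum_add_distrib, lemA, lemB]
    have split : (∑ j, t j)
        = (∑ j ∈ Finset.univ.filter (fun j => T.par j = T.root), t j)
        + ∑ j' ∈ Finset.univ.filter (fun j' => ¬ T.par j' = T.root), t j' := by
      rw [Finset.sum_filter_add_sum_filter_not]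
    have csum : (∑ σ, c σ)
        = ∑ j ∈ Finset.univ.filter (fun j => T.par j = T.root), t j := by
      have := total.symm.trans split
      linarith
    rw [step1, csum]
    have h3' : (∑ j ∈ Finset.univ.filter (fun j => T.par j = T.root), b j i) = p i := by
      have := congrFun h3 i
      simpa [Finset.sum_apply] using this
    calc (∑ j ∈ Finset.univ.filter (fun j => T.par j = T.root), t j)
        = ∑ j ∈ Finset.univ.filter (fun j => T.par j = T.root), b j i := by
          refine Finset.sum_congr rfl fun j hj => ?_
          have : T.par j = T.root := (Finset.mem_filter.mp hj).2
          rw [ht]; simp [this, hx1]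
      _ = p i := h3'
  · intro i
    apply Finset.sum_nonneg
    intro σ _
    exact mul_nonneg (h5 i σ).1 (hx0 σ)
end

section
/- Let f : Q → P be a linear function from the sequence-form polytope Q to the polytope P = {y ∈ R^d : Py = p, y ≥ 0} ⊆ [0,γ]^d. Then there exists a matrix A ∈ M_{Q→P} (the polytope of matrices satisfying: P A_{(ja)} = b_j for all terminal sequences ja; A_{(σ)} = 0 for all nonterminal sequences σ; ∑_{j'∈C_∅} b_{j'} = p; ∑_{j'∈C_{ja}} b_{j'} = b_j for all nonterminal ja; A_{(σ)} ∈ [0,γ]^d; for some vectors b_j ∈ R^k) such that f(x) = A x for all x ∈ Q. -/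
namespace TFDPaux

open Finset

variable {T : TFDP}

lemma act_uniq {σ : T.Seq} {j j' : T.Inf} (h : σ ∈ T.act j) (h' : σ ∈ T.act j') : j = j' := by
  by_contra hne
  exact Finset.disjoint_left.1 (T.act_disjoint j j' hne) h h'

def maxD (T : TFDP) : ℕ := Finset.univ.sup T.depth

lemma depth_le (j : T.Inf) : T.depth j ≤ maxD T := Finset.le_sup (Finset.mem_univ j)

lemma depth_lt {j j₂ : T.Inf} (h : T.par j₂ ∈ T.act j) : T.depth j < T.depth j₂ := by
  rcases T.par_wf j₂ with h0 | ⟨j₃, h3, hd⟩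
  · rw [h0] at h; exact absurd h (T.root_not_act j)
  · rwa [act_uniq h h3]

/-- `dep σ` : a depth measure on sequences. -/
noncomputable def dep (σ : T.Seq) : ℕ := if h : ∃ j, σ ∈ T.act j then T.depth h.choose + 1 else 0

lemma dep_eq {σ : T.Seq} {j : T.Inf} (h : σ ∈ T.act j) : dep σ = T.depth j + 1 := by
  have he : ∃ j', σ ∈ T.act j' := ⟨j, h⟩
  rw [dep, dif_pos he, act_uniq he.choose_spec h]

lemma dep_root : dep (T.root) = 0 := by
  rw [dep, dif_neg]
  push_neg
  exact fun j => T.root_not_act j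

lemma dep_le (σ : T.Seq) : dep σ ≤ maxD T + 1 := by
  rw [dep]; split
  · exact Nat.add_le_add_right (depth_le _) 1
  · omega

lemma dep_lt_of_par {σ a : T.Seq} {j₁ : T.Inf} (hp : T.par j₁ = σ) (ha : a ∈ T.act j₁) :
    dep σ < dep a := by
  rw [dep_eq ha]
  rcases T.covers σ with rfl | ⟨j₀, h0⟩
  · rw [dep_root]; omega
  · rw [dep_eq h0]
    have : T.par j₁ ∈ T.act j₀ := hp ▸ h0
    have := depth_lt this
    omega

lemma dep_par_lt {σ : T.Seq} {j : T.Inf} (h : σ ∈ T.act j) : dep (T.par j) < dep σ :=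
  dep_lt_of_par rfl h

end TFDPaux


namespace TFDPaux
open Finset
variable {T : TFDP}

/-- `u sel hsel σ` : the partial pure strategy that "starts" at `σ` and plays according
to the selector `sel` below `σ`. -/
noncomputable def u (sel : T.Inf → T.Seq) (hsel : ∀ j, sel j ∈ T.act j) (σ : T.Seq) :
    T.Seq → ℝ :=
  (fun ρ => if ρ = σ then 1 else 0) +
  ∑ j₁ ∈ (Finset.univ.filter (fun j₁ => T.par j₁ = σ)).attach, u sel hsel (sel j₁.1)
termination_by maxD T + 1 - dep σ
decreasing_by
  have h1 : T.par j₁.1 = σ := (Finset.mem_filter.1 j₁.2).2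
  have h2 := dep_lt_of_par h1 (hsel j₁.1)
  have h3 := dep_le (T := T) (sel j₁.1)
  omega

lemma u_def (sel : T.Inf → T.Seq) (hsel : ∀ j, sel j ∈ T.act j) (σ : T.Seq) :
    u sel hsel σ =
      (fun ρ => if ρ = σ then 1 else 0) +
      ∑ j₁ ∈ Finset.univ.filter (fun j₁ => T.par j₁ = σ), u sel hsel (sel j₁) := by
  rw [u]
  congr 1
  exact Finset.sum_attach _ (fun j₁ => u sel hsel (sel j₁))

variable {sel : T.Inf → T.Seq} {hsel : ∀ j, sel j ∈ T.act j}

lemma u_nonneg (σ ρ : T.Seq) : 0 ≤ u sel hsel σ ρ := by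
  rw [u_def]
  have IH : ∀ j₁ ∈ Finset.univ.filter (fun j₁ => T.par j₁ = σ), 0 ≤ u sel hsel (sel j₁) ρ := by
    intro j₁ hj₁
    have h1 : T.par j₁ = σ := (Finset.mem_filter.1 hj₁).2
    have h2 := dep_lt_of_par h1 (hsel j₁)
    have h3 := dep_le (T := T) (sel j₁)
    exact u_nonneg (sel j₁) ρ
  simp only [Pi.add_apply, Finset.sum_apply]
  have : (0:ℝ) ≤ if ρ = σ then 1 else 0 := by positivity
  exact add_nonneg this (Finset.sum_nonneg IH)
termination_by maxD T + 1 - dep σ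
decreasing_by
  have h3 := dep_le (T := T) (sel j₁)
  omega

lemma u_root_ne {σ : T.Seq} (h : σ ≠ T.root) : u sel hsel σ T.root = 0 := by
  rw [u_def]
  simp only [Pi.add_apply, Finset.sum_apply]
  rw [if_neg (fun hc => h hc.symm)]
  rw [Finset.sum_eq_zero, add_zero]
  intro j₁ hj₁
  have h1 : T.par j₁ = σ := (Finset.mem_filter.1 hj₁).2
  have h2 := dep_lt_of_par h1 (hsel j₁)
  have h3 := dep_le (T := T) (sel j₁)
  exact u_root_ne (fun hc => T.root_not_act j₁ (hc ▸ hsel j₁))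
termination_by maxD T + 1 - dep σ
decreasing_by omega

lemma u_root_root : u sel hsel T.root T.root = 1 := by
  rw [u_def]
  simp only [Pi.add_apply, Finset.sum_apply, if_pos rfl]
  have : (∑ j₁ ∈ Finset.univ.filter (fun j₁ => T.par j₁ = T.root),
      u sel hsel (sel j₁) T.root) = 0 := by
    apply Finset.sum_eq_zero
    intro j₁ hj₁
    exact u_root_ne (fun hc => T.root_not_act j₁ (hc ▸ hsel j₁))
  rw [this, add_zero]; simp

lemma u_flow (σ : T.Seq) (j'' : T.Inf) :
    ∑ a ∈ T.act j'', u sel hsel σ a =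
      u sel hsel σ (T.par j'') + (if σ ∈ T.act j'' then 1 else 0) := by
  rw [u_def]
  simp only [Pi.add_apply, Finset.sum_apply]
  rw [Finset.sum_add_distrib]
  have h1 : (∑ a ∈ T.act j'', if a = σ then (1:ℝ) else 0) =
      (if σ ∈ T.act j'' then 1 else 0) := by
    simp [Finset.sum_ite_eq']
  rw [h1, Finset.sum_comm]
  have h2 : ∀ j₁ ∈ Finset.univ.filter (fun j₁ => T.par j₁ = σ),
      ∑ a ∈ T.act j'', u sel hsel (sel j₁) a =
        u sel hsel (sel j₁) (T.par j'') + (if sel j₁ ∈ T.act j'' then 1 else 0) := by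
    intro j₁ hj₁
    have hp : T.par j₁ = σ := (Finset.mem_filter.1 hj₁).2
    have h2 := dep_lt_of_par hp (hsel j₁)
    have h3 := dep_le (T := T) (sel j₁)
    exact u_flow (sel j₁) j''
  rw [Finset.sum_congr rfl h2, Finset.sum_add_distrib]
  have h3 : (∑ j₁ ∈ Finset.univ.filter (fun j₁ => T.par j₁ = σ),
      if sel j₁ ∈ T.act j'' then (1:ℝ) else 0) = (if T.par j'' = σ then 1 else 0) := by
    by_cases hps : T.par j'' = σ
    · rw [if_pos hps]
      rw [Finset.sum_eq_single_of_mem j'' (by simp [hps])]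
      · rw [if_pos (hsel j'')]
      · intro j₁ hj₁ hne
        rw [if_neg]
        intro hmem
        exact hne (act_uniq (hsel j₁) hmem)
    · rw [if_neg hps]
      apply Finset.sum_eq_zero
      intro j₁ hj₁
      rw [if_neg]
      intro hmem
      have : j₁ = j'' := act_uniq (hsel j₁) hmem
      exact hps (this ▸ (Finset.mem_filter.1 hj₁).2)
  rw [h3]
  ring
termination_by maxD T + 1 - dep σ
decreasing_by omega

/-- Terminal sequences: `u` is just the indicator. -/
lemma u_terminal {σ : T.Seq} (h : ¬ ∃ j, T.par j = σ) :
    u sel hsel σ = fun ρ => if ρ = σ then 1 else 0 := by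
  rw [u_def]
  have : Finset.univ.filter (fun j₁ => T.par j₁ = σ) = ∅ := by
    rw [Finset.filter_eq_empty_iff]
    exact fun {j₁} _ hc => h ⟨j₁, hc⟩
  rw [this]
  simp

lemma u_root_mem : u sel hsel T.root ∈ T.Q := by
  refine ⟨fun ρ => u_nonneg _ _, u_root_root, fun j => ?_⟩
  rw [u_flow]
  rw [if_neg (T.root_not_act j), add_zero]

end TFDPaux

namespace TFDPaux
open Finset
variable {T : TFDP}

/-- The sequence form of the uniform behavioral strategy: a strictly positive point of `Q`. -/
noncomputable def xbar (T : TFDP) (σ : T.Seq) : ℝ :=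
  if h : ∃ j, σ ∈ T.act j then xbar T (T.par h.choose) / ((T.act h.choose).card : ℝ)
  else 1
termination_by dep σ
decreasing_by exact dep_par_lt h.choose_spec

lemma xbar_eq {σ : T.Seq} {j : T.Inf} (h : σ ∈ T.act j) :
    xbar T σ = xbar T (T.par j) / ((T.act j).card : ℝ) := by
  have he : ∃ j', σ ∈ T.act j' := ⟨j, h⟩
  rw [xbar, dif_pos he]
  rw [act_uniq he.choose_spec h]

lemma xbar_root : xbar T T.root = 1 := by
  rw [xbar, dif_neg]
  push_neg
  exact fun j => T.root_not_act j

lemma xbar_pos (σ : T.Seq) : 0 < xbar T σ := by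
  rw [xbar]
  split
  · rename_i h
    have := dep_par_lt h.choose_spec
    exact div_pos (xbar_pos _) (by exact_mod_cast (T.act_nonempty h.choose).card_pos)
  · norm_num
termination_by dep σ

lemma xbar_mem : xbar T ∈ T.Q := by
  refine ⟨fun σ => (xbar_pos σ).le, xbar_root, fun j => ?_⟩
  have hc : ((T.act j).card : ℝ) ≠ 0 := by
    exact_mod_cast (T.act_nonempty j).card_pos.ne'
  calc ∑ σ ∈ T.act j, xbar T σ
      = ∑ _σ ∈ T.act j, xbar T (T.par j) / ((T.act j).card : ℝ) :=
        Finset.sum_congr rfl (fun σ hσ => xbar_eq hσ)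
    _ = ((T.act j).card : ℝ) * (xbar T (T.par j) / ((T.act j).card : ℝ)) := by
        rw [Finset.sum_const, nsmul_eq_mul]
    _ = xbar T (T.par j) := by field_simp

/-- measure for `phic` recursion -/
noncomputable def μf (σ : T.Seq) : ℕ :=
  if h : ∃ j, T.par j = σ then maxD T + 1 - T.depth h.choose else 0

/-- `phic σ` : the coefficient vector expressing `x σ` as a linear function of the
terminal coordinates of `x`, valid whenever `x` satisfies the flow constraints. -/
noncomputable def phic (T : TFDP) (σ : T.Seq) : T.Seq → ℝ :=
  if h : ∃ j, T.par j = σ then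
    ∑ a ∈ (T.act h.choose).attach, phic T a.1
  else fun ρ => if ρ = σ then 1 else 0
termination_by μf σ
decreasing_by
  have hp : T.par h.choose = σ := h.choose_spec
  have hd : T.depth h.choose ≤ maxD T := depth_le (T := T) h.choose
  have hrhs : μf σ = maxD T + 1 - T.depth h.choose := dif_pos h
  rw [hrhs]
  show μf a.1 < _
  rw [μf]
  split
  · rename_i h2
    have hm : T.par h2.choose ∈ T.act h.choose := by rw [h2.choose_spec]; exact a.2
    have := depth_lt hm
    omega
  · omega

lemma phic_def_nonterm {σ : T.Seq} (h : ∃ j, T.par j = σ) :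
    phic T σ = ∑ a ∈ T.act h.choose, phic T a := by
  rw [phic.eq_def, dif_pos h]
  exact Finset.sum_attach _ (fun a => phic T a)

lemma phic_def_term {σ : T.Seq} (h : ¬ ∃ j, T.par j = σ) :
    phic T σ = fun ρ => if ρ = σ then 1 else 0 := by
  rw [phic.eq_def, dif_neg h]

end TFDPaux

namespace TFDPaux
open Finset
variable {T : TFDP}

lemma μf_lt {σ : T.Seq} (h : ∃ j, T.par j = σ) {a : T.Seq} (ha : a ∈ T.act h.choose) :
    μf a < μf σ := by
  have hd : T.depth h.choose ≤ maxD T := depth_le (T := T) h.choose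
  have hrhs : μf σ = maxD T + 1 - T.depth h.choose := dif_pos h
  rw [hrhs, μf]
  split
  · rename_i h2
    have hm : T.par h2.choose ∈ T.act h.choose := by rw [h2.choose_spec]; exact ha
    have := depth_lt hm
    omega
  · omega

lemma phic_nonneg (σ ρ : T.Seq) : 0 ≤ phic T σ ρ := by
  by_cases h : ∃ j, T.par j = σ
  · rw [phic_def_nonterm h]
    simp only [Finset.sum_apply]
    refine Finset.sum_nonneg (fun a ha => ?_)
    have := μf_lt h ha
    exact phic_nonneg a ρ
  · rw [phic_def_term h]
    positivity
termination_by μf σ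

lemma phic_zero {σ ρ : T.Seq} (hρ : ∃ j, T.par j = ρ) : phic T σ ρ = 0 := by
  by_cases h : ∃ j, T.par j = σ
  · rw [phic_def_nonterm h]
    simp only [Finset.sum_apply]
    refine Finset.sum_eq_zero (fun a ha => ?_)
    have := μf_lt h ha
    exact phic_zero hρ
  · rw [phic_def_term h]
    simp only []
    rw [if_neg]
    rintro rfl
    exact h hρ
termination_by μf σ

/-- flow constraints -/
def Flow (x : T.Seq → ℝ) : Prop := ∀ j, (∑ σ ∈ T.act j, x σ) = x (T.par j)

lemma phic_recon {x : T.Seq → ℝ} (hx : Flow x) (σ : T.Seq) :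
    ∑ ρ, phic T σ ρ * x ρ = x σ := by
  by_cases h : ∃ j, T.par j = σ
  · rw [phic_def_nonterm h]
    simp only [Finset.sum_apply, Finset.sum_mul]
    rw [Finset.sum_comm]
    have : ∀ a ∈ T.act h.choose, ∑ ρ, phic T a ρ * x ρ = x a := by
      intro a ha
      have := μf_lt h ha
      exact phic_recon hx a
    rw [Finset.sum_congr rfl this, hx h.choose, h.choose_spec]
  · rw [phic_def_term h]
    simp [Finset.sum_ite_eq']
termination_by μf σ

end TFDPaux

namespace TFDPaux
open Finset
variable {T : TFDP}

lemma inf'_attach {α : Type*} [DecidableEq α] (s : Finset α) (hs : s.Nonempty)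
    (g : α → ℝ) :
    s.attach.inf' (hs.attach) (fun a => g a.1) = s.inf' hs g := by
  apply le_antisymm
  · obtain ⟨i, hi, heq⟩ := Finset.exists_mem_eq_inf' hs g
    rw [heq]
    exact Finset.inf'_le _ (Finset.mem_attach _ ⟨i, hi⟩)
  · obtain ⟨i, hi, hali⟩ := Finset.exists_mem_eq_inf' (hs.attach) (fun a : {x // x ∈ s} => g a.1)
    rw [hali]
    exact Finset.inf'_le _ i.2

/-- `mval c σ` : the minimum, over pure continuations below `σ`, of the total
`c`-weight collected below `σ` (including `c σ` itself). -/
noncomputable def mval (c : T.Seq → ℝ) (σ : T.Seq) : ℝ :=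
  c σ + ∑ j₁ ∈ (Finset.univ.filter (fun j₁ => T.par j₁ = σ)).attach,
    (T.act j₁.1).attach.inf' ((T.act_nonempty j₁.1).attach) (fun a => mval c a.1)
termination_by maxD T + 1 - dep σ
decreasing_by
  have h1 : T.par j₁.1 = σ := (Finset.mem_filter.1 j₁.2).2
  have h2 := dep_lt_of_par h1 a.2
  have h3 := dep_le (T := T) (a.1)
  omega

lemma mval_def (c : T.Seq → ℝ) (σ : T.Seq) :
    mval c σ = c σ + ∑ j₁ ∈ Finset.univ.filter (fun j₁ => T.par j₁ = σ),
      (T.act j₁).inf' (T.act_nonempty j₁) (mval c) := by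
  rw [mval]
  congr 1
  rw [← Finset.sum_attach (Finset.univ.filter (fun j₁ => T.par j₁ = σ))
    (fun j₁ => (T.act j₁).inf' (T.act_nonempty j₁) (mval c))]
  exact Finset.sum_congr rfl (fun j₁ _ => inf'_attach _ _ _)

/-- argmin selector for `mval c` -/
noncomputable def selm (c : T.Seq → ℝ) (j : T.Inf) : T.Seq :=
  (Finset.exists_mem_eq_inf' (T.act_nonempty j) (mval c)).choose

lemma selm_mem (c : T.Seq → ℝ) (j : T.Inf) : selm c j ∈ T.act j :=
  (Finset.exists_mem_eq_inf' (T.act_nonempty j) (mval c)).choose_spec.1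

lemma selm_eq (c : T.Seq → ℝ) (j : T.Inf) :
    (T.act j).inf' (T.act_nonempty j) (mval c) = mval c (selm c j) :=
  (Finset.exists_mem_eq_inf' (T.act_nonempty j) (mval c)).choose_spec.2

/-- the value of the argmin continuation from `σ` is `mval c σ` -/
lemma mval_usum (c : T.Seq → ℝ) (σ : T.Seq) :
    ∑ ρ, c ρ * u (selm c) (selm_mem c) σ ρ = mval c σ := by
  rw [u_def, mval_def]
  simp only [Pi.add_apply, Finset.sum_apply]
  rw [Finset.sum_congr rfl (fun ρ _ => mul_add (c ρ) _ _), Finset.sum_add_distrib]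
  congr 1
  · simp [Finset.sum_ite_eq', mul_comm]
  · rw [Finset.sum_congr rfl (fun ρ _ => Finset.mul_sum _ _ (c ρ))]
    rw [Finset.sum_comm]
    refine Finset.sum_congr rfl (fun j₁ hj₁ => ?_)
    have h1 : T.par j₁ = σ := (Finset.mem_filter.1 hj₁).2
    have h2 := dep_lt_of_par h1 (selm_mem c j₁)
    have h3 := dep_le (T := T) (selm c j₁)
    rw [mval_usum c (selm c j₁), selm_eq]
termination_by maxD T + 1 - dep σ
decreasing_by omega

end TFDPaux

namespace TFDPaux
open Finset
variable {T : TFDP}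

lemma univ_split : (Finset.univ : Finset T.Seq) =
    insert T.root (Finset.univ.biUnion T.act) := by
  apply Finset.ext
  intro σ
  simp only [Finset.mem_univ, Finset.mem_insert, Finset.mem_biUnion, true_iff]
  rcases T.covers σ with h | ⟨j, hj⟩
  · exact Or.inl h
  · exact Or.inr ⟨j, trivial, hj⟩

lemma root_not_biUnion : T.root ∉ Finset.univ.biUnion T.act := by
  simp only [Finset.mem_biUnion]
  rintro ⟨j, -, hj⟩
  exact T.root_not_act j hj

lemma sum_univ_split (g : T.Seq → ℝ) :
    ∑ ρ, g ρ = g T.root + ∑ j, ∑ a ∈ T.act j, g a := by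
  rw [univ_split, Finset.sum_insert root_not_biUnion]
  congr 1
  rw [Finset.sum_biUnion]
  intro j _ j' _ hne
  exact T.act_disjoint j j' hne

/-- the adjusted (nonnegative) coefficient vector -/
noncomputable def dcoef (c : T.Seq → ℝ) (σ : T.Seq) : ℝ :=
  if h : ∃ j, σ ∈ T.act j then
    mval c σ - (T.act h.choose).inf' (T.act_nonempty h.choose) (mval c)
  else mval c σ

lemma dcoef_root : dcoef (T := T) c T.root = mval c T.root := by
  rw [dcoef, dif_neg]
  push_neg
  exact fun j => T.root_not_act j

lemma inf'_act_congr {g : T.Seq → ℝ} {j₁ j₂ : T.Inf} (h : j₁ = j₂) :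
    (T.act j₁).inf' (T.act_nonempty j₁) g = (T.act j₂).inf' (T.act_nonempty j₂) g := by
  subst h; rfl

lemma dcoef_eq {c : T.Seq → ℝ} {σ : T.Seq} {j : T.Inf} (h : σ ∈ T.act j) :
    dcoef c σ = mval c σ - (T.act j).inf' (T.act_nonempty j) (mval c) := by
  have he : ∃ j', σ ∈ T.act j' := ⟨j, h⟩
  rw [dcoef, dif_pos he, inf'_act_congr (act_uniq he.choose_spec h)]

lemma dcoef_nonneg (c : T.Seq → ℝ) (hr : 0 ≤ mval c T.root) (σ : T.Seq) :
    0 ≤ dcoef c σ := by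
  rcases T.covers σ with rfl | ⟨j, hj⟩
  · rw [dcoef_root]; exact hr
  · rw [dcoef_eq hj]
    have h2 : (T.act j).inf' (T.act_nonempty j) (mval c) ≤ mval c σ :=
      Finset.inf'_le (mval c) hj
    linarith

/-- The key identity: the adjusted coefficients define the same linear functional as `c`
on every vector satisfying the flow constraints. -/
lemma dcoef_sum {c : T.Seq → ℝ} {x : T.Seq → ℝ} (hx : Flow x) :
    ∑ ρ, dcoef c ρ * x ρ = ∑ ρ, c ρ * x ρ := by
  have hgroup : ∑ j, (T.act j).inf' (T.act_nonempty j) (mval c) * x (T.par j)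
      = ∑ ρ, (mval c ρ - c ρ) * x ρ := by
    have : ∀ ρ : T.Seq, (mval c ρ - c ρ) * x ρ =
        ∑ j ∈ Finset.univ.filter (fun j => T.par j = ρ),
          (T.act j).inf' (T.act_nonempty j) (mval c) * x (T.par j) := by
      intro ρ
      have hm := mval_def c ρ
      have : (mval c ρ - c ρ) = ∑ j ∈ Finset.univ.filter (fun j => T.par j = ρ),
          (T.act j).inf' (T.act_nonempty j) (mval c) := by linarith
      rw [this, Finset.sum_mul]
      refine Finset.sum_congr rfl (fun j hj => ?_)
      rw [(Finset.mem_filter.1 hj).2]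
    rw [Finset.sum_congr rfl (fun ρ _ => this ρ)]
    exact (Finset.sum_fiberwise_of_maps_to (fun j _ => Finset.mem_univ (T.par j))
      (fun j => (T.act j).inf' (T.act_nonempty j) (mval c) * x (T.par j))).symm
  have hsplit1 := sum_univ_split (fun ρ => dcoef c ρ * x ρ)
  have hsplit2 := sum_univ_split (fun ρ => mval c ρ * x ρ)
  have hstep : ∑ j, ∑ a ∈ T.act j, dcoef c a * x a
      = (∑ j, ∑ a ∈ T.act j, mval c a * x a)
        - ∑ j, (T.act j).inf' (T.act_nonempty j) (mval c) * x (T.par j) := by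
    rw [← Finset.sum_sub_distrib]
    refine Finset.sum_congr rfl (fun j _ => ?_)
    rw [← hx j, Finset.mul_sum, ← Finset.sum_sub_distrib]
    refine Finset.sum_congr rfl (fun a ha => ?_)
    rw [dcoef_eq ha]
    ring
  have hsub : ∑ j, ∑ a ∈ T.act j, (mval c a - c a) * x a
      = (∑ j, ∑ a ∈ T.act j, mval c a * x a) - (∑ j, ∑ a ∈ T.act j, c a * x a) := by
    rw [← Finset.sum_sub_distrib]
    refine Finset.sum_congr rfl (fun j _ => ?_)
    rw [← Finset.sum_sub_distrib]
    exact Finset.sum_congr rfl (fun a _ => by ring)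
  rw [hsplit1, dcoef_root, hstep, hgroup,
    sum_univ_split (fun ρ => (mval c ρ - c ρ) * x ρ), hsub,
    sum_univ_split (fun ρ => c ρ * x ρ)]
  ring

end TFDPaux

namespace TFDPaux
open Finset
variable {T : TFDP}

/-- the ancestors (including itself) of a sequence -/
noncomputable def ancS (T : TFDP) (σ : T.Seq) : Finset T.Seq :=
  insert σ (if h : ∃ j, σ ∈ T.act j then ancS T (T.par h.choose) else ∅)
termination_by dep σ
decreasing_by exact dep_par_lt h.choose_spec

lemma anc_self (σ : T.Seq) : σ ∈ ancS T σ := by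
  rw [ancS]; exact Finset.mem_insert_self _ _

lemma anc_dep {σ ρ : T.Seq} (h : ρ ∈ ancS T σ) : dep ρ ≤ dep σ := by
  rw [ancS] at h
  rcases Finset.mem_insert.1 h with rfl | h2
  · exact le_refl _
  · split at h2
    · rename_i he
      have hlt := dep_par_lt he.choose_spec
      have := anc_dep h2
      omega
    · exact absurd h2 (Finset.notMem_empty ρ)
termination_by dep σ
decreasing_by exact hlt

lemma anc_chain {σ ρ : T.Seq} {j : T.Inf} (h : ρ ∈ ancS T σ) (hj : ρ ∈ T.act j) :
    T.par j ∈ ancS T σ := by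
  rw [ancS] at h ⊢
  rcases Finset.mem_insert.1 h with rfl | h2
  · have he : ∃ j', ρ ∈ T.act j' := ⟨j, hj⟩
    rw [dif_pos he]
    apply Finset.mem_insert_of_mem
    rw [act_uniq he.choose_spec hj] at *
    exact anc_self _
  · split at h2
    · rename_i he
      have hlt := dep_par_lt he.choose_spec
      apply Finset.mem_insert_of_mem
      rw [dif_pos he]
      exact anc_chain h2 hj
    · exact absurd h2 (Finset.notMem_empty ρ)
termination_by dep σ
decreasing_by exact hlt

lemma anc_dep_inj {σ ρ ρ' : T.Seq} (h : ρ ∈ ancS T σ) (h' : ρ' ∈ ancS T σ)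
    (hd : dep ρ = dep ρ') : ρ = ρ' := by
  rw [ancS] at h h'
  rcases Finset.mem_insert.1 h with rfl | h2 <;>
    rcases Finset.mem_insert.1 h' with rfl | h2'
  · rfl
  · split at h2'
    · rename_i he
      have hlt := dep_par_lt he.choose_spec
      have := anc_dep h2'
      omega
    · exact absurd h2' (Finset.notMem_empty _)
  · split at h2
    · rename_i he
      have hlt := dep_par_lt he.choose_spec
      have := anc_dep h2
      omega
    · exact absurd h2 (Finset.notMem_empty _)
  · split at h2
    · rename_i he
      have hlt := dep_par_lt he.choose_spec
      rw [dif_pos he] at h2'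
      exact anc_dep_inj h2 h2' hd
    · exact absurd h2 (Finset.notMem_empty _)
termination_by dep σ
decreasing_by exact hlt

lemma anc_act_uniq {σ ρ ρ' : T.Seq} {j : T.Inf} (h : ρ ∈ ancS T σ) (h' : ρ' ∈ ancS T σ)
    (hj : ρ ∈ T.act j) (hj' : ρ' ∈ T.act j) : ρ = ρ' :=
  anc_dep_inj h h' (by rw [dep_eq hj, dep_eq hj'])

/-- `Rv τ` : a strategy in `Q` that reaches `τ` with probability 1 (uniform off the
path to `τ`). -/
noncomputable def Rv (T : TFDP) (τ : T.Seq) (ρ : T.Seq) : ℝ :=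
  if h : ∃ j, ρ ∈ T.act j then
    (if ρ ∈ ancS T τ then 1
     else if ∃ a ∈ T.act h.choose, a ∈ ancS T τ then 0
     else ((T.act h.choose).card : ℝ)⁻¹) * Rv T τ (T.par h.choose)
  else 1
termination_by dep ρ
decreasing_by exact dep_par_lt h.choose_spec

lemma Rv_eq {τ ρ : T.Seq} {j : T.Inf} (h : ρ ∈ T.act j) :
    Rv T τ ρ =
      (if ρ ∈ ancS T τ then 1
       else if ∃ a ∈ T.act j, a ∈ ancS T τ then 0
       else ((T.act j).card : ℝ)⁻¹) * Rv T τ (T.par j) := by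
  have he : ∃ j', ρ ∈ T.act j' := ⟨j, h⟩
  rw [Rv, dif_pos he]
  rw [act_uniq he.choose_spec h]

lemma Rv_root : Rv T τ T.root = 1 := by
  rw [Rv, dif_neg]
  push_neg
  exact fun j => T.root_not_act j

lemma Rv_nonneg (τ ρ : T.Seq) : 0 ≤ Rv T τ ρ := by
  rw [Rv]
  split
  · rename_i h
    have := dep_par_lt h.choose_spec
    refine mul_nonneg ?_ (Rv_nonneg τ _)
    split
    · norm_num
    split
    · norm_num
    · positivity
  · norm_num
termination_by dep ρ

lemma Rv_flow (τ : T.Seq) (j : T.Inf) :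
    ∑ a ∈ T.act j, Rv T τ a = Rv T τ (T.par j) := by
  have hstep : ∀ a ∈ T.act j, Rv T τ a =
      (if a ∈ ancS T τ then 1
       else if ∃ a' ∈ T.act j, a' ∈ ancS T τ then 0
       else ((T.act j).card : ℝ)⁻¹) * Rv T τ (T.par j) :=
    fun a ha => Rv_eq ha
  rw [Finset.sum_congr rfl hstep, ← Finset.sum_mul]
  have hsum : (∑ a ∈ T.act j, if a ∈ ancS T τ then (1:ℝ)
      else if ∃ a' ∈ T.act j, a' ∈ ancS T τ then 0
      else ((T.act j).card : ℝ)⁻¹) = 1 := by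
    by_cases h2 : ∃ a' ∈ T.act j, a' ∈ ancS T τ
    · obtain ⟨a₀, ha₀, ha₀anc⟩ := h2
      rw [Finset.sum_eq_single_of_mem a₀ ha₀]
      · rw [if_pos ha₀anc]
      · intro a ha hne
        rw [if_neg (fun hanc => hne (anc_act_uniq hanc ha₀anc ha ha₀)), if_pos ⟨a₀, ha₀, ha₀anc⟩]
    · have : ∀ a ∈ T.act j, (if a ∈ ancS T τ then (1:ℝ)
          else if ∃ a' ∈ T.act j, a' ∈ ancS T τ then 0
          else ((T.act j).card : ℝ)⁻¹) = ((T.act j).card : ℝ)⁻¹ := by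
        intro a ha
        rw [if_neg (fun hanc => h2 ⟨a, ha, hanc⟩), if_neg h2]
      rw [Finset.sum_congr rfl this, Finset.sum_const, nsmul_eq_mul]
      have hc : ((T.act j).card : ℝ) ≠ 0 := by
        exact_mod_cast (T.act_nonempty j).card_pos.ne'
      field_simp
  rw [hsum, one_mul]

lemma Rv_anc {τ : T.Seq} (ρ : T.Seq) (hρ : ρ ∈ ancS T τ) : Rv T τ ρ = 1 := by
  rcases T.covers ρ with rfl | ⟨j, hj⟩
  · exact Rv_root
  · rw [Rv_eq hj, if_pos hρ]
    have hpar : T.par j ∈ ancS T τ := anc_chain hρ hj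
    have := dep_par_lt hj
    rw [Rv_anc (T.par j) hpar, mul_one]
termination_by dep ρ
decreasing_by exact dep_par_lt hj

lemma Rv_self (τ : T.Seq) : Rv T τ τ = 1 := Rv_anc τ (anc_self τ)

lemma Rv_mem (τ : T.Seq) : Rv T τ ∈ T.Q :=
  ⟨Rv_nonneg τ, Rv_root, Rv_flow τ⟩

end TFDPaux


namespace TFDPaux
open Finset
variable {T : TFDP}

lemma mulVec_finsum {I J K : Type*} [Fintype J] [Fintype K] (M : Matrix I J ℝ)
    (s : Finset K) (g : K → (J → ℝ)) :
    M.mulVec (∑ j ∈ s, g j) = ∑ j ∈ s, M.mulVec (g j) := by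
  simp only [← Matrix.mulVecLin_apply]
  exact map_sum M.mulVecLin g s

lemma mulVec_indicator {I : Type*} (M : Matrix I T.Seq ℝ) (τ : T.Seq) :
    M.mulVec (fun ρ => if ρ = τ then 1 else 0) = fun i => M i τ := by
  funext i
  simp [Matrix.mulVec, dotProduct]

end TFDPaux


open TFDPaux Finset

/-- completeness direction of the characterization theorem.  Every
linear function `f` from the sequence-form polytope `Q` to the polytope
`P = {y : Pm y = p, y ≥ 0} ⊆ [0,γ]^d` is represented on `Q` by a matrix `A` belonging
to the characterization polytope `M_{Q→P}`. -/
theorem stmt_12 (T : TFDP) (k d : ℕ) (Pm : Matrix (Fin k) (Fin d) ℝ)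
    (p : Fin k → ℝ) (γ : ℝ)
    (hroot : ∃ j, T.par j = T.root)
    (hP : ∀ y : Fin d → ℝ, Pm.mulVec y = p → (∀ i, 0 ≤ y i) → ∀ i, y i ≤ γ)
    (f : (T.Seq → ℝ) →ₗ[ℝ] (Fin d → ℝ))
    (hf : ∀ x ∈ T.Q, Pm.mulVec (f x) = p ∧ ∀ i, 0 ≤ f x i) :
    ∃ A ∈ T.Mset Pm p γ, ∀ x ∈ T.Q, A.mulVec x = f x := by
  classical
  -- base coefficient vectors
  set ci : Fin d → T.Seq → ℝ := fun i ρ => f (fun σ' => phic T σ' ρ) i with hci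
  have ci_repr : ∀ (x : T.Seq → ℝ), Flow x → ∀ i, ∑ ρ, ci i ρ * x ρ = f x i := by
    intro x hx i
    have h1 : x = ∑ ρ, x ρ • (fun σ' => phic T σ' ρ) := by
      funext σ'
      simp only [Finset.sum_apply, Pi.smul_apply, smul_eq_mul]
      rw [← phic_recon hx σ']
      exact Finset.sum_congr rfl (fun ρ _ => mul_comm _ _)
    have h2 : f x = ∑ ρ, x ρ • f (fun σ' => phic T σ' ρ) := by
      conv_lhs => rw [h1]
      rw [map_sum]
      exact Finset.sum_congr rfl fun ρ _ => map_smul f (x ρ) _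
    rw [h2]
    simp only [Finset.sum_apply, Pi.smul_apply, smul_eq_mul, hci]
    exact Finset.sum_congr rfl fun ρ _ => mul_comm _ _
  have ci_zero : ∀ i ρ, (∃ j, T.par j = ρ) → ci i ρ = 0 := by
    intro i ρ hρ
    have : (fun σ' => phic T σ' ρ) = (0 : T.Seq → ℝ) := funext fun σ' => phic_zero hρ
    rw [hci]
    simp only [this, map_zero]
    rfl
  -- flow of elements of Q
  have Qflow : ∀ x ∈ T.Q, Flow x := fun x hx => hx.2.2
  -- nonnegativity of the root min-value
  have mval_root_nonneg : ∀ i, 0 ≤ mval (ci i) T.root := by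
    intro i
    rw [← mval_usum (ci i) T.root,
      ci_repr _ (Qflow _ (u_root_mem (sel := selm (ci i)) (hsel := selm_mem (ci i)))) i]
    exact (hf _ (u_root_mem)).2 i
  -- the matrix A
  set A : Matrix (Fin d) T.Seq ℝ := fun i τ => ∑ σ, dcoef (ci i) σ * phic T σ τ with hA
  have A_repr : ∀ (x : T.Seq → ℝ), Flow x → ∀ i, A.mulVec x i = f x i := by
    intro x hx i
    have : A.mulVec x i = ∑ σ, dcoef (ci i) σ * (∑ τ, phic T σ τ * x τ) := by
      simp only [Matrix.mulVec, dotProduct, hA, Finset.sum_mul]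
      rw [Finset.sum_comm]
      refine Finset.sum_congr rfl (fun σ _ => ?_)
      rw [Finset.mul_sum]
      refine Finset.sum_congr rfl (fun τ _ => ?_)
      ring
    rw [this]
    have : ∀ σ, (∑ τ, phic T σ τ * x τ) = x σ := phic_recon hx
    simp only [this]
    rw [dcoef_sum hx, ci_repr x hx i]
  have A_repr' : ∀ x ∈ T.Q, A.mulVec x = f x := by
    intro x hx
    funext i
    exact A_repr x (Qflow x hx) i
  have A_zero : ∀ τ, (∃ j, T.par j = τ) → ∀ i, A i τ = 0 := by
    intro τ hτ i
    rw [hA]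
    exact Finset.sum_eq_zero (fun σ _ => by rw [phic_zero hτ, mul_zero])
  have A_nonneg : ∀ i τ, 0 ≤ A i τ := by
    intro i τ
    rw [hA]
    exact Finset.sum_nonneg fun σ _ =>
      mul_nonneg (dcoef_nonneg (ci i) (mval_root_nonneg i) σ) (phic_nonneg σ τ)
  have A_le : ∀ i τ, A i τ ≤ γ := by
    intro i τ
    have h1 : A i τ = A i τ * Rv T τ τ := by rw [Rv_self, mul_one]
    have h2 : A i τ * Rv T τ τ ≤ ∑ τ', A i τ' * Rv T τ τ' :=
      Finset.single_le_sum (f := fun τ' => A i τ' * Rv T τ τ')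
        (fun τ' _ => mul_nonneg (A_nonneg i τ') (Rv_nonneg τ τ')) (Finset.mem_univ τ)
    have h3 : (∑ τ', A i τ' * Rv T τ τ') = f (Rv T τ) i := by
      rw [← A_repr (Rv T τ) (Qflow _ (Rv_mem τ)) i]
      simp [Matrix.mulVec, dotProduct]
    have h4 : f (Rv T τ) i ≤ γ :=
      hP _ (hf _ (Rv_mem τ)).1 (hf _ (Rv_mem τ)).2 i
    linarith
  -- canonical selector
  set chl : T.Inf → T.Seq := fun j => (T.act_nonempty j).choose with hchldef
  have hchl : ∀ j, chl j ∈ T.act j := fun j => (T.act_nonempty j).choose_spec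
  -- the key exchange lemma
  have KL : ∀ (j : T.Inf) (σ σ' : T.Seq), σ ∈ T.act j → σ' ∈ T.act j →
      Pm.mulVec (A.mulVec (u chl hchl σ)) = Pm.mulVec (A.mulVec (u chl hchl σ')) := by
    intro j σ σ' hσ hσ'
    set v : T.Seq → ℝ := u chl hchl σ - u chl hchl σ' with hv
    have vflow : Flow v := by
      intro j''
      simp only [hv, Pi.sub_apply, Finset.sum_sub_distrib, u_flow]
      have : (if σ ∈ T.act j'' then (1:ℝ) else 0) = (if σ' ∈ T.act j'' then 1 else 0) := by
        by_cases h : σ ∈ T.act j''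
        · rw [if_pos h, if_pos]
          rw [← act_uniq hσ h]
          exact hσ'
        · rw [if_neg h, if_neg]
          intro h'
          rw [← act_uniq hσ' h'] at h
          exact h hσ
      rw [this]
      ring
    have vroot : v T.root = 0 := by
      have h1 : σ ≠ T.root := fun hc => T.root_not_act j (hc ▸ hσ)
      have h2 : σ' ≠ T.root := fun hc => T.root_not_act j (hc ▸ hσ')
      simp [hv, u_root_ne h1, u_root_ne h2]
    -- a small positive step keeps us in Q
    have hne : (Finset.univ : Finset T.Seq).Nonempty := ⟨T.root, Finset.mem_univ _⟩
    set ε : ℝ := Finset.univ.inf' hne (fun ρ => xbar T ρ / (|v ρ| + 1)) with hεdef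
    have hεpos : 0 < ε := by
      rw [hεdef, Finset.lt_inf'_iff]
      intro ρ _
      have := xbar_pos (T := T) ρ
      positivity
    set x1 : T.Seq → ℝ := xbar T + ε • v with hx1
    have hx1mem : x1 ∈ T.Q := by
      refine ⟨?_, ?_, ?_⟩
      · intro ρ
        have hle : ε ≤ xbar T ρ / (|v ρ| + 1) :=
          Finset.inf'_le _ (Finset.mem_univ ρ)
        have habs : 0 ≤ |v ρ| := abs_nonneg (v ρ)
        have h2 : ε * (|v ρ| + 1) ≤ xbar T ρ := by
          rw [← le_div_iff₀ (by positivity)]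
          exact hle
        rw [mul_add, mul_one] at h2
        have hmul : ε * -|v ρ| ≤ ε * v ρ :=
          mul_le_mul_of_nonneg_left (neg_abs_le (v ρ)) hεpos.le
        rw [mul_neg] at hmul
        simp only [hx1, Pi.add_apply, Pi.smul_apply, smul_eq_mul]
        linarith
      · simp [hx1, xbar_root, vroot]
      · intro j''
        simp only [hx1, Pi.add_apply, Pi.smul_apply, smul_eq_mul, Finset.sum_add_distrib]
        rw [xbar_mem.2.2 j'', ← Finset.mul_sum, vflow j'']
    have hPv : Pm.mulVec (f v) = 0 := by
      have e1 : Pm.mulVec (f x1) = p := (hf x1 hx1mem).1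
      have e2 : Pm.mulVec (f (xbar T)) = p := (hf _ xbar_mem).1
      have e3 : f x1 = f (xbar T) + ε • f v := by
        rw [hx1, map_add, map_smul]
      rw [e3, Matrix.mulVec_add, Matrix.mulVec_smul, e2] at e1
      have : ε • Pm.mulVec (f v) = 0 := by
        have := congrArg (fun w => w - p) e1
        simpa using this
      rcases smul_eq_zero.1 this with h | h
      · exact absurd h hεpos.ne'
      · exact h
    have hAv : A.mulVec v = f v := by
      funext i
      exact A_repr v vflow i
    have hfinal : Pm.mulVec (A.mulVec (u chl hchl σ)) - Pm.mulVec (A.mulVec (u chl hchl σ')) = 0 := by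
      rw [← Matrix.mulVec_sub Pm, ← Matrix.mulVec_sub A]
      show Pm.mulVec (A.mulVec v) = 0
      rw [hAv]
      exact hPv
    exact sub_eq_zero.1 hfinal
  -- the b-vectors
  set b : T.Inf → Fin k → ℝ := fun j => Pm.mulVec (A.mulVec (u chl hchl (chl j))) with hb
  refine ⟨A, ⟨b, ?_, ?_, ?_, ?_, ?_⟩, A_repr'⟩
  · -- (i) terminal columns
    intro j σ hσ hterm
    have h1 : u chl hchl σ = fun ρ => if ρ = σ then 1 else 0 := u_terminal hterm
    have h2 : Pm.mulVec (fun i => A i σ) = Pm.mulVec (A.mulVec (u chl hchl σ)) := by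
      rw [h1, mulVec_indicator]
    rw [h2, KL j σ (chl j) hσ (hchl j)]
  · -- (ii) nonterminal columns vanish
    exact fun σ hσ i => A_zero σ hσ i
  · -- (iii) root flow
    have hu := u_def chl hchl T.root
    have hAsum : A.mulVec (u chl hchl T.root)
        = A.mulVec (fun ρ => if ρ = T.root then 1 else 0)
          + ∑ j₁ ∈ Finset.univ.filter (fun j₁ => T.par j₁ = T.root),
              A.mulVec (u chl hchl (chl j₁)) := by
      rw [hu, Matrix.mulVec_add, mulVec_finsum]
    have hz : A.mulVec (fun ρ => if ρ = T.root then 1 else 0) = 0 := by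
      rw [mulVec_indicator]
      funext i
      exact A_zero T.root hroot i
    have e1 : Pm.mulVec (A.mulVec (u chl hchl T.root)) = p := by
      rw [A_repr' _ u_root_mem]
      exact (hf _ u_root_mem).1
    rw [hAsum, hz, zero_add, mulVec_finsum] at e1
    simpa only [hb] using e1
  · -- (iv) internal flow
    intro j σ hσ hnt
    have hu := u_def chl hchl σ
    have hAsum : A.mulVec (u chl hchl σ)
        = A.mulVec (fun ρ => if ρ = σ then 1 else 0)
          + ∑ j₁ ∈ Finset.univ.filter (fun j₁ => T.par j₁ = σ),
              A.mulVec (u chl hchl (chl j₁)) := by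
      rw [hu, Matrix.mulVec_add, mulVec_finsum]
    have hz : A.mulVec (fun ρ => if ρ = σ then 1 else 0) = 0 := by
      rw [mulVec_indicator]
      funext i
      exact A_zero σ hnt i
    have e1 : ∑ j₁ ∈ Finset.univ.filter (fun j₁ => T.par j₁ = σ),
        Pm.mulVec (A.mulVec (u chl hchl (chl j₁)))
        = Pm.mulVec (A.mulVec (u chl hchl σ)) := by
      rw [hAsum, hz, zero_add, mulVec_finsum]
    simp only [hb]
    rw [e1, KL j σ (chl j) hσ (hchl j)]
  · -- (v) column bounds
    exact fun i σ => ⟨A_nonneg i σ, A_le i σ⟩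
end
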